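/- arXiv:1611.00824 — 2 statements merged into one kernel-verified Lean document; each statement's English description precedes it below -/
import Mathlib

section
/- Let A be a local ring with involution * such that 2 is a unit, a − a* lies in the Jacobson radical r for every a ∈ A, and r is nilpotent. Then any two invertible skew-hermitian matrices of the same size over A are congruent: if J₁, J₂ ∈ M_n(A) are invertible with J₁ᴴ = −J₁ and J₂ᴴ = −J₂, then there exists P ∈ GL_n(A) with PᴴJ₁P = J₂. (Equivalently, all non-degenerate skew-hermitian forms on a free right A-module of rank n are equivalent.) -/
/-!
Newton's method for congruence: let `R` be a ring with involution in which `2` is a unit, and `I`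
a nilpotent left ideal. If `G` and `S` are skew elements, `G` invertible and `G - S ∈ I`, then
`Q = 1 - G⁻¹ (G - S) / 2` is invertible and `Q* G Q - S = (G - S) y` with `y ∈ I`, so after
finitely many steps `G` becomes congruent to `S`.

Over the local ring `A` this applies to the ideal of matrices with non-unit entries. The diagonal
entries `a` of a skew-hermitian matrix are non-units, since `2 a = a - a*`, so a row of an
invertible skew-hermitian `J` has a unit entry off the diagonal. After a permutation, the `2 × 2`
block it spans is congruent to `!![0, 1; -1, 0]` by Newton's method, and a Schur-complement
congruence splits it off. Induction on the size shows that any two invertible skew-hermitian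
matrices of the same size are congruent.
-/

open Matrix Pointwise IsLocalRing

namespace IsLocalRing

variable {R : Type*} [Ring R] [IsLocalRing R]

instance isDedekindFiniteMonoid : IsDedekindFiniteMonoid R where
  mul_eq_one_symm {x y} hxy := by
    -- `y * x` is an idempotent, and the only idempotents of a local ring are `0` and `1`.
    rcases isUnit_or_isUnit_of_add_one (add_sub_cancel (y * x) 1) with h | h
    · refine h.mul_left_cancel ?_
      rw [mul_one, mul_assoc, ← mul_assoc x, hxy, one_mul]
    · have hx : x = 0 := h.mul_left_eq_zero.1 <| by
        rw [mul_sub, mul_one, ← mul_assoc, hxy, one_mul, sub_self]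
      exact absurd (by rw [← hxy, hx, zero_mul]) (one_ne_zero (α := R))

variable (R) in
def nonunitsLeftIdeal : Ideal R where
  __ := nonunitsAddSubmonoid R
  smul_mem' _ _ hb hab := hb (isUnit_of_mul_isUnit_right hab)

end IsLocalRing

theorem mem_nonunits_of_star_eq_neg {A : Type*} [Ring A] [StarRing A] (h2 : IsUnit (2 : A))
    (hsk : ∀ a : A, a - star a ∈ nonunits A) {a : A} (ha : star a = -a) : a ∈ nonunits A :=
  fun hu => hsk a (by rw [ha, sub_neg_eq_add, ← two_mul]; exact h2.mul hu)

namespace AddSubmonoid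

variable {R : Type*} [Semiring R]

theorem pow_eq_bot_of_list_prod_eq_zero (s : AddSubmonoid R) {e : ℕ}
    (h : ∀ l : List R, l.length = e → (∀ x ∈ l, x ∈ s) → l.prod = 0) : s ^ e = ⊥ := by
  rw [pow_eq_closure_pow_set, eq_bot_iff, closure_le]
  intro x hx
  obtain ⟨f, rfl⟩ := Set.mem_pow.1 hx
  exact h _ (List.length_ofFn ..) (by simp [List.mem_ofFn])

theorem pow_mem_pow {s : AddSubmonoid R} {x : R} (hx : x ∈ s) (n : ℕ) : x ^ n ∈ s ^ n := by
  induction n with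
  | zero => simpa using natCast_mem_one (R := R) 1
  | succ n ih => simpa [pow_succ] using mul_mem_mul ih hx

variable {ι : Type*} [Fintype ι]

theorem matrix_mul_matrix_le (s t : AddSubmonoid R) :
    (s.matrix : AddSubmonoid (Matrix ι ι R)) * t.matrix ≤ (s * t).matrix :=
  mul_le.2 fun _ hX _ hY i j => by
    rw [mul_apply]
    exact _root_.sum_mem fun k _ => mul_mem_mul (hX i k) (hY k j)

theorem matrix_pow_le [DecidableEq ι] (s : AddSubmonoid R) (n : ℕ) :
    (s.matrix : AddSubmonoid (Matrix ι ι R)) ^ n ≤ (s ^ n).matrix := by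
  induction n with
  | zero =>
    rintro _ ⟨k, rfl⟩ i j
    by_cases hij : i = j <;> simp [Matrix.natCast_apply, hij]
  | succ n ih =>
    rw [pow_succ, pow_succ]
    exact (mul_le_mul_left ih).trans (matrix_mul_matrix_le _ _)

end AddSubmonoid

namespace Ideal

variable {R : Type*} [Semiring R]

theorem toAddSubmonoid_pow_succ_le (I : Ideal R) (k : ℕ) :
    I.toAddSubmonoid ^ (k + 1) ≤ I.toAddSubmonoid := by
  rw [pow_succ]
  exact AddSubmonoid.mul_le.2 fun _ _ _ hy => I.mul_mem_left _ hy

theorem matrix_pow_eq_bot {I : Ideal R} {e : ℕ} (hI : I.toAddSubmonoid ^ e = ⊥)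
    (n : Type*) [Fintype n] [DecidableEq n] : (I.matrix n).toAddSubmonoid ^ e = ⊥ :=
  eq_bot_iff.2 <| (AddSubmonoid.matrix_pow_le _ e).trans fun _ hX => by
    rw [hI] at hX
    ext i j
    exact hX i j

end Ideal

def IsStarCongr {R : Type*} [Monoid R] [StarMul R] (a b : R) : Prop :=
  ∃ p : Rˣ, star (p : R) * a * p = b

namespace IsStarCongr

variable {R : Type*} [Monoid R] [StarMul R] {a b c : R}

theorem refl (a : R) : IsStarCongr a a := ⟨1, by simp⟩

theorem symm (h : IsStarCongr a b) : IsStarCongr b a := by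
  obtain ⟨p, rfl⟩ := h
  refine ⟨p⁻¹, ?_⟩
  rw [mul_assoc, mul_assoc, p.mul_inv, mul_one, ← mul_assoc, ← star_mul, p.mul_inv, star_one,
    one_mul]

theorem trans (hab : IsStarCongr a b) (hbc : IsStarCongr b c) : IsStarCongr a c := by
  obtain ⟨p, rfl⟩ := hab
  obtain ⟨q, rfl⟩ := hbc
  exact ⟨p * q, by simp only [Units.val_mul, star_mul, mul_assoc]⟩

theorem isUnit (h : IsStarCongr a b) (ha : IsUnit a) : IsUnit b := by
  obtain ⟨p, rfl⟩ := h
  exact (p.isUnit.star.mul ha).mul p.isUnit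

theorem map {S : Type*} [Monoid S] [StarMul S] (f : R →* S) (hf : ∀ x, f (star x) = star (f x))
    (h : IsStarCongr a b) : IsStarCongr (f a) (f b) := by
  obtain ⟨p, rfl⟩ := h
  exact ⟨Units.map f p, by simp [hf]⟩

theorem star_eq_neg {R : Type*} [Ring R] [StarRing R] {a b : R} (h : IsStarCongr a b)
    (ha : star a = -a) : star b = -b := by
  obtain ⟨p, rfl⟩ := h
  simp [mul_assoc, ha]

end IsStarCongr

section Newton

variable {R : Type*} [Ring R]

theorem isUnit_of_sub_mem {I : Ideal R} {e : ℕ} (hI : I.toAddSubmonoid ^ e = ⊥) {S G : R}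
    (hS : IsUnit S) (hGS : G - S ∈ I) : IsUnit G := by
  obtain ⟨s, rfl⟩ := hS
  have hnil : IsNilpotent (↑s⁻¹ * (G - s)) :=
    ⟨e, by simpa [hI] using AddSubmonoid.pow_mem_pow (I.mul_mem_left (↑s⁻¹) hGS) e⟩
  have hG : G = s * (1 + ↑s⁻¹ * (G - s)) := by
    rw [mul_add, mul_one, s.mul_inv_cancel_left, add_sub_cancel]
  rw [hG]
  exact s.isUnit.mul hnil.isUnit_one_add

variable [StarRing R]

theorem Units.star_inv_eq_neg (u : Rˣ) (hu : star (u : R) = -u) : star (↑u⁻¹ : R) = -↑u⁻¹ := by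
  rw [← neg_eq_iff_eq_neg, ← mul_one (star _), ← u.mul_inv, ← mul_assoc, ← neg_mul, ← mul_neg,
    ← hu, ← star_mul, u.mul_inv, star_one, one_mul]

theorem star_one_sub_inv_mul_mul_one_sub_inv_mul (G : Rˣ) (hG : star (G : R) = -G) (Y : R) :
    star (1 - ↑G⁻¹ * Y) * G * (1 - ↑G⁻¹ * Y) = G - (Y - star Y) - star Y * ↑G⁻¹ * Y := by
  simp only [star_sub, star_one, star_mul, G.star_inv_eq_neg hG, sub_mul, mul_sub, one_mul,
    mul_one, mul_neg, neg_mul, mul_assoc, G.mul_inv_cancel_left, G.inv_mul]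
  noncomm_ring

theorem exists_isStarCongr_sub_eq_sub_mul (h2 : IsUnit (2 : R)) {I : Ideal R} {e : ℕ}
    (hI : I.toAddSubmonoid ^ e = ⊥) {S G : R} (hS : star S = -S) (hG : IsUnit G)
    (hG' : star G = -G) (hGS : G - S ∈ I) :
    ∃ G', IsStarCongr G G' ∧ ∃ y ∈ I, G' - S = (G - S) * y := by
  obtain ⟨G, rfl⟩ := hG
  let := h2.invertible
  have hE : star (↑G - S) = -(↑G - S) := by rw [star_sub, hG', hS, neg_sub_neg, neg_sub]
  have h2' : star (⅟2 : R) = ⅟2 := by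
    refine (invOf_eq_left_inv ?_).symm
    calc star (⅟2 : R) * 2 = star (2 * ⅟2) := by rw [star_mul, star_ofNat]
      _ = 1 := by rw [mul_invOf_self, star_one]
  -- With `Y = (G - S) / 2` the linear term `Y - Y*` of the step is exactly `G - S`.
  have hY : ⅟2 * (↑G - S) - star (⅟2 * (↑G - S)) = ↑G - S := by
    rw [star_mul, hE, h2', neg_mul, sub_neg_eq_add,
      ← (Commute.invOf_left (Commute.ofNat_left 2 (↑G - S))).eq, ← add_mul,
      invOf_two_add_invOf_two, one_mul]
  have hQ : IsUnit (1 - ↑G⁻¹ * (⅟2 * (↑G - S))) := isUnit_of_sub_mem hI isUnit_one <| by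
    rw [sub_sub_cancel_left]
    exact I.neg_mem (I.mul_mem_left _ (I.mul_mem_left _ hGS))
  refine ⟨_, ⟨hQ.unit, rfl⟩, ⅟2 * ↑G⁻¹ * (⅟2 * (↑G - S)),
    I.mul_mem_left _ (I.mul_mem_left _ hGS), ?_⟩
  rw [IsUnit.unit_spec, star_one_sub_inv_mul_mul_one_sub_inv_mul G hG', hY, star_mul, hE, h2']
  noncomm_ring

theorem exists_isStarCongr_sub_mem_pow (h2 : IsUnit (2 : R)) {I : Ideal R} {e : ℕ}
    (hI : I.toAddSubmonoid ^ e = ⊥) {S G : R} (hS : star S = -S) (hG : IsUnit G)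
    (hG' : star G = -G) (hGS : G - S ∈ I) (k : ℕ) :
    ∃ G', IsStarCongr G G' ∧ G' - S ∈ I.toAddSubmonoid ^ (k + 1) := by
  induction k with
  | zero => exact ⟨G, .refl G, by rwa [zero_add, pow_one]⟩
  | succ k ih =>
    obtain ⟨G₁, hG₁, hG₁S⟩ := ih
    obtain ⟨G₂, hG₂, y, hy, hG₂S⟩ := exists_isStarCongr_sub_eq_sub_mul h2 hI hS
      (hG₁.isUnit hG) (hG₁.star_eq_neg hG') (I.toAddSubmonoid_pow_succ_le k hG₁S)
    refine ⟨G₂, hG₁.trans hG₂, ?_⟩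
    rw [hG₂S, pow_succ _ (k + 1)]
    exact AddSubmonoid.mul_mem_mul hG₁S hy

theorem isStarCongr_of_sub_mem (h2 : IsUnit (2 : R)) {I : Ideal R} {e : ℕ}
    (hI : I.toAddSubmonoid ^ e = ⊥) {S G : R} (hS : star S = -S) (hG : IsUnit G)
    (hG' : star G = -G) (hGS : G - S ∈ I) : IsStarCongr G S := by
  obtain ⟨G', hG', hG'S⟩ := exists_isStarCongr_sub_mem_pow h2 hI hS hG hG' hGS e
  rw [pow_succ, hI, AddSubmonoid.bot_mul, AddSubmonoid.mem_bot, sub_eq_zero] at hG'S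
  exact hG'S ▸ hG'

end Newton

namespace Matrix

variable {A : Type*} [Ring A] {m n : Type*} [Fintype m] [Fintype n] [DecidableEq m]
  [DecidableEq n]

theorem isUnit_of_isUnit_fromBlocks_zero_zero {a : Matrix m m A} {d : Matrix n n A}
    (h : IsUnit (fromBlocks a 0 0 d)) : IsUnit d := by
  obtain ⟨u, hu⟩ := h
  have h₁ := congrArg toBlocks₂₂ u.mul_inv
  have h₂ := congrArg toBlocks₂₂ u.inv_mul
  rw [hu, ← fromBlocks_toBlocks (↑u⁻¹ : Matrix (m ⊕ n) (m ⊕ n) A), fromBlocks_multiply,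
    ← fromBlocks_one, toBlocks_fromBlocks₂₂, toBlocks_fromBlocks₂₂] at h₁ h₂
  exact ⟨⟨d, _, by simpa using h₁, by simpa using h₂⟩, rfl⟩

theorem exists_isUnit_apply [IsLocalRing A] {J : Matrix n n A} (hJ : IsUnit J) (i : n) :
    ∃ k, IsUnit (J i k) := by
  have h := congrFun (congrFun hJ.mul_val_inv i) i
  rw [mul_apply, one_apply_eq] at h
  obtain ⟨k, -, hk⟩ := exists_of_isUnit_sum (h ▸ isUnit_one)
  exact ⟨k, isUnit_of_mul_isUnit_left hk⟩

variable (A) in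
def hyperbolicPlane : Matrix (Fin 2) (Fin 2) A := !![0, 1; -1, 0]

theorem isUnit_hyperbolicPlane : IsUnit (hyperbolicPlane A) := by
  refine ⟨⟨hyperbolicPlane A, -hyperbolicPlane A, ?_, ?_⟩, rfl⟩ <;>
    simp [hyperbolicPlane, one_fin_two]

variable [StarRing A]

theorem hyperbolicPlane_conjTranspose : (hyperbolicPlane A)ᴴ = -hyperbolicPlane A := by
  ext i j
  fin_cases i <;> fin_cases j <;> simp [hyperbolicPlane]

theorem isStarCongr_hyperbolicPlane_antidiagonal (b : Aˣ) :
    IsStarCongr (hyperbolicPlane A) !![0, ↑b; -star ↑b, 0] := by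
  refine ⟨⟨diagonal ![1, ↑b], diagonal ![1, ↑b⁻¹], ?_, ?_⟩, ?_⟩
  · simp [diagonal_mul_diagonal, ← diagonal_one, diagonal_eq_diagonal_iff, Fin.forall_fin_two]
  · simp [diagonal_mul_diagonal, ← diagonal_one, diagonal_eq_diagonal_iff, Fin.forall_fin_two]
  · ext i j
    fin_cases i <;> fin_cases j <;> simp [hyperbolicPlane, star_eq_conjTranspose]

theorem apply_self_mem_nonunits {ι : Type*} (h2 : IsUnit (2 : A))
    (hsk : ∀ a : A, a - star a ∈ nonunits A) {J : Matrix ι ι A} (hJ : Jᴴ = -J) (i : ι) :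
    J i i ∈ nonunits A :=
  mem_nonunits_of_star_eq_neg h2 hsk (by simpa using congrFun (congrFun hJ i) i)

theorem isStarCongr_submatrix_self (σ : Equiv.Perm n) (J : Matrix n n A) :
    IsStarCongr J (J.submatrix σ σ) := by
  refine ⟨Units.map (permMatrixHom (R := A)) (toUnits σ), ?_⟩
  simp [star_eq_conjTranspose, PEquiv.toMatrix_toPEquiv_mul, PEquiv.mul_toMatrix_toPEquiv,
    Equiv.Perm.inv_def]

theorem isStarCongr_reindex (e : m ≃ n) {J₁ J₂ : Matrix m m A} (h : IsStarCongr J₁ J₂) :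
    IsStarCongr (reindex e e J₁) (reindex e e J₂) :=
  h.map (reindexRingEquiv A e).toMonoidHom fun _ => rfl

theorem isStarCongr_fromBlocks_zero_zero {a₁ a₂ : Matrix m m A} {d₁ d₂ : Matrix n n A}
    (ha : IsStarCongr a₁ a₂) (hd : IsStarCongr d₁ d₂) :
    IsStarCongr (fromBlocks a₁ 0 0 d₁) (fromBlocks a₂ 0 0 d₂) := by
  obtain ⟨p, rfl⟩ := ha
  obtain ⟨q, rfl⟩ := hd
  refine ⟨⟨fromBlocks p 0 0 q, fromBlocks ↑p⁻¹ 0 0 ↑q⁻¹, ?_, ?_⟩, ?_⟩ <;>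
    simp [fromBlocks_multiply, star_eq_conjTranspose, fromBlocks_conjTranspose, mul_assoc]

theorem isStarCongr_fromBlocks_schur (g : (Matrix m m A)ˣ) (hg : (g : Matrix m m A)ᴴ = -g)
    (B : Matrix m n A) (C : Matrix n m A) (D : Matrix n n A) (hBC : Bᴴ = -C) :
    IsStarCongr (fromBlocks ↑g B C D)
      (fromBlocks ↑g 0 0 (D - C * (↑g⁻¹ : Matrix m m A) * B)) := by
  have hg' := g.star_inv_eq_neg hg
  have hgB : (g : Matrix m m A) * ((↑g⁻¹ : Matrix m m A) * B) = B := by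
    rw [← Matrix.mul_assoc, g.mul_inv, Matrix.one_mul]
  refine ⟨⟨fromBlocks 1 (-((↑g⁻¹ : Matrix m m A) * B)) 0 1,
    fromBlocks 1 ((↑g⁻¹ : Matrix m m A) * B) 0 1, ?_, ?_⟩, ?_⟩
  · simp [fromBlocks_multiply]
  · simp [fromBlocks_multiply]
  · rw [star_eq_conjTranspose] at hg'
    simp [fromBlocks_multiply, star_eq_conjTranspose, fromBlocks_conjTranspose, hg', hBC,
      Matrix.mul_assoc, hgB, neg_add_eq_sub]

variable [IsLocalRing A]

theorem isStarCongr_hyperbolicPlane (h2 : IsUnit (2 : A))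
    (hsk : ∀ a : A, a - star a ∈ nonunits A) {e : ℕ} (hnil : nonunitsAddSubmonoid A ^ e = ⊥)
    {g : Matrix (Fin 2) (Fin 2) A} (hg : gᴴ = -g) (hb : IsUnit (g 0 1)) :
    IsStarCongr g (hyperbolicPlane A) := by
  obtain ⟨b, hb⟩ := hb
  have hSh := isStarCongr_hyperbolicPlane_antidiagonal b
  set h : Matrix (Fin 2) (Fin 2) A := !![0, ↑b; -star ↑b, 0]
  have hgh : g - h ∈ (nonunitsLeftIdeal A).matrix (Fin 2) := by
    have h10 : star (g 0 1) = -g 1 0 := by simpa using congrFun (congrFun hg 1) 0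
    have hdiag : g - h = !![g 0 0, 0; 0, g 1 1] := by
      ext i j
      fin_cases i <;> fin_cases j <;> simp [h, hb, h10]
    rw [hdiag, Ideal.mem_matrix]
    simp only [Fin.forall_fin_two, of_apply, cons_val', cons_val_zero, cons_val_one,
      cons_val_fin_one, empty_val', zero_mem, and_true, true_and]
    exact ⟨apply_self_mem_nonunits h2 hsk hg 0, apply_self_mem_nonunits h2 hsk hg 1⟩
  have hI := Ideal.matrix_pow_eq_bot (I := nonunitsLeftIdeal A) hnil (Fin 2)
  have h2' : IsUnit (2 : Matrix (Fin 2) (Fin 2) A) := by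
    simpa only [map_ofNat] using h2.map (scalar (Fin 2))
  exact (isStarCongr_of_sub_mem h2' hI (hSh.star_eq_neg hyperbolicPlane_conjTranspose)
    (isUnit_of_sub_mem hI (hSh.isUnit isUnit_hyperbolicPlane) hgh) hg hgh).trans hSh.symm

variable {κ : Type*} [Fintype κ] [DecidableEq κ]

theorem exists_isStarCongr_isUnit_apply_inl_inl (h2 : IsUnit (2 : A))
    (hsk : ∀ a : A, a - star a ∈ nonunits A) {J : Matrix (Fin 2 ⊕ κ) (Fin 2 ⊕ κ) A}
    (hJ : IsUnit J) (hJ' : Jᴴ = -J) :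
    ∃ J₁, IsStarCongr J J₁ ∧ IsUnit (J₁ (.inl 0) (.inl 1)) := by
  obtain ⟨k, hk⟩ := exists_isUnit_apply hJ (.inl 0)
  have hk0 : k ≠ .inl 0 := by
    rintro rfl
    exact apply_self_mem_nonunits h2 hsk hJ' _ hk
  refine ⟨J.submatrix (Equiv.swap (.inl 1) k) (Equiv.swap (.inl 1) k),
    isStarCongr_submatrix_self _ _, ?_⟩
  rwa [submatrix_apply, Equiv.swap_apply_left, Equiv.swap_apply_of_ne_of_ne (by simp) hk0.symm]

theorem exists_isStarCongr_fromBlocks_hyperbolicPlane_of_isUnit_apply (h2 : IsUnit (2 : A))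
    (hsk : ∀ a : A, a - star a ∈ nonunits A) {e : ℕ} (hnil : nonunitsAddSubmonoid A ^ e = ⊥)
    {J : Matrix (Fin 2 ⊕ κ) (Fin 2 ⊕ κ) A} (hJ' : Jᴴ = -J)
    (hb : IsUnit (J (.inl 0) (.inl 1))) :
    ∃ J' : Matrix κ κ A, IsStarCongr J (fromBlocks (hyperbolicPlane A) 0 0 J') := by
  have hblocks := hJ'
  rw [← fromBlocks_toBlocks J, fromBlocks_conjTranspose, fromBlocks_neg] at hblocks
  obtain ⟨hg, -, hBC, -⟩ := fromBlocks_inj.1 hblocks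
  have hgS := isStarCongr_hyperbolicPlane h2 hsk hnil hg hb
  obtain ⟨g, hg₁₁⟩ := hgS.symm.isUnit isUnit_hyperbolicPlane
  have hschur := isStarCongr_fromBlocks_schur g (hg₁₁ ▸ hg) _ _ J.toBlocks₂₂ hBC
  rw [hg₁₁, fromBlocks_toBlocks] at hschur
  exact ⟨_, hschur.trans (isStarCongr_fromBlocks_zero_zero hgS (.refl _))⟩

theorem exists_isStarCongr_fromBlocks_hyperbolicPlane (h2 : IsUnit (2 : A))
    (hsk : ∀ a : A, a - star a ∈ nonunits A) {e : ℕ} (hnil : nonunitsAddSubmonoid A ^ e = ⊥)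
    {J : Matrix (Fin 2 ⊕ κ) (Fin 2 ⊕ κ) A} (hJ : IsUnit J) (hJ' : Jᴴ = -J) :
    ∃ J' : Matrix κ κ A, IsUnit J' ∧ J'ᴴ = -J' ∧
      IsStarCongr J (fromBlocks (hyperbolicPlane A) 0 0 J') := by
  obtain ⟨J₁, hJJ₁, hb⟩ := exists_isStarCongr_isUnit_apply_inl_inl h2 hsk hJ hJ'
  obtain ⟨J', hJ₁J'⟩ := exists_isStarCongr_fromBlocks_hyperbolicPlane_of_isUnit_apply h2 hsk
    hnil (hJJ₁.star_eq_neg hJ') hb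
  have h := hJJ₁.trans hJ₁J'
  have hskew := h.star_eq_neg hJ'
  rw [star_eq_conjTranspose, fromBlocks_conjTranspose, fromBlocks_neg] at hskew
  exact ⟨J', isUnit_of_isUnit_fromBlocks_zero_zero (h.isUnit hJ),
    (fromBlocks_inj.1 hskew).2.2.2, h⟩

end Matrix

theorem isStarCongr_of_isUnit_of_conjTranspose_eq_neg {A : Type*} [Ring A] [StarRing A]
    [IsLocalRing A] (h2 : IsUnit (2 : A)) (hsk : ∀ a : A, a - star a ∈ nonunits A) {e : ℕ}
    (hnil : nonunitsAddSubmonoid A ^ e = ⊥) :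
    ∀ {n : ℕ} {J₁ J₂ : Matrix (Fin n) (Fin n) A}, IsUnit J₁ → J₁ᴴ = -J₁ → IsUnit J₂ →
      J₂ᴴ = -J₂ → IsStarCongr J₁ J₂
  | 0, J₁, J₂, _, _, _, _ => Subsingleton.elim J₁ J₂ ▸ .refl J₁
  | 1, J₁, _, hJ₁, hJ₁', _, _ => by
    obtain ⟨k, hk⟩ := exists_isUnit_apply hJ₁ 0
    exact absurd (Subsingleton.elim k 0 ▸ hk) (apply_self_mem_nonunits h2 hsk hJ₁' 0)
  | m + 2, J₁, J₂, hJ₁, hJ₁', hJ₂, hJ₂' => by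
    let e : Fin 2 ⊕ Fin m ≃ Fin (m + 2) := finSumFinEquiv.trans (finCongr (add_comm 2 m))
    have split : ∀ {J : Matrix (Fin (m + 2)) (Fin (m + 2)) A}, IsUnit J → Jᴴ = -J →
        ∃ J' : Matrix (Fin m) (Fin m) A, IsUnit J' ∧ J'ᴴ = -J' ∧
          IsStarCongr (reindex e.symm e.symm J) (fromBlocks (hyperbolicPlane A) 0 0 J') :=
      fun hJ hJ' => exists_isStarCongr_fromBlocks_hyperbolicPlane h2 hsk hnil
        (hJ.map (reindexRingEquiv A e.symm)) (by rw [conjTranspose_reindex, hJ']; rfl)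
    obtain ⟨J₁', hu₁, hs₁, hc₁⟩ := split hJ₁ hJ₁'
    obtain ⟨J₂', hu₂, hs₂, hc₂⟩ := split hJ₂ hJ₂'
    have hc := hc₁.trans ((isStarCongr_fromBlocks_zero_zero (.refl _)
      (isStarCongr_of_isUnit_of_conjTranspose_eq_neg h2 hsk hnil hu₁ hs₁ hu₂ hs₂)).trans
        hc₂.symm)
    simpa using isStarCongr_reindex e hc

/-- Let `A` be a local ring with involution `*` such that `2` is a unit,
`a - a*` is a non-unit for every `a`, and the Jacobson radical (= set of non-units) is
nilpotent.  Then any two invertible skew-hermitian `n × n` matrices over `A` are congruent: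
there exists `P ∈ GL_n(A)` with `PᴴJ₁P = J₂`.  (Equivalently, all non-degenerate
skew-hermitian forms on a free right `A`-module of rank `n` are equivalent.) -/
theorem stmt6 {A : Type*} [Ring A] [StarRing A] [IsLocalRing A]
    (h2 : IsUnit (2 : A)) (hsk : ∀ a : A, a - star a ∈ nonunits A)
    (hnil : ∃ e : ℕ, 0 < e ∧
      ∀ l : List A, l.length = e → (∀ x ∈ l, x ∈ nonunits A) → l.prod = 0)
    {n : ℕ} (J₁ J₂ : Matrix (Fin n) (Fin n) A)
    (hJ₁ : IsUnit J₁) (hsh₁ : J₁ᴴ = -J₁)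
    (hJ₂ : IsUnit J₂) (hsh₂ : J₂ᴴ = -J₂) :
    ∃ P : Matrix (Fin n) (Fin n) A, IsUnit P ∧ Pᴴ * J₁ * P = J₂ := by
  obtain ⟨e, -, he⟩ := hnil
  obtain ⟨P, hP⟩ := isStarCongr_of_isUnit_of_conjTranspose_eq_neg h2 hsk
    ((nonunitsAddSubmonoid A).pow_eq_bot_of_list_prod_eq_zero he) hJ₁ hsh₁ hJ₂ hsh₂
  exact ⟨P, P.isUnit, hP⟩
end

section
/- Let A be a local ring with involution * such that 2 is a unit, a − a* lies in the Jacobson radical r for every a ∈ A, and r is nilpotent. Let J ∈ M_{2m}(A) be an invertible skew-hermitian matrix, let I be a proper two-sided ideal of A, and let C ∈ M_{2m}(A) be a matrix such that every entry of CᴴJC − J₀ lies in I (i.e., the columns of C form an approximate symplectic system modulo I). Then there exists C' ∈ GL_{2m}(A) such that every entry of C' − C lies in I and C'ᴴJC' = J₀. -/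
/-!
Write `F = CᴴJC` and `N = 1 + J₀F`, so that `F = J₀` exactly when `N = 0`. Since `J₀` and `F` are
skew-hermitian, `J₀ Nᴴ = N J₀`, and for `T = 1 + N/2` this gives `J₀ (TᴴFT) = T (N - 1) T`; the
defect of `TᴴFT` is therefore `N²(3 + N)/4`. The entries of `N` lie in `I`, hence are non-units,
so `N` is nilpotent, and each such Newton step halves its nilpotency index. After finitely many
steps `C' = C T₁ ⋯ T_k` satisfies `C'ᴴJC' = J₀`, and `C' ≡ C` modulo `I` because every `Tᵢ - 1`
is a multiple of a defect. Finally `C'` has the left inverse `-J₀C'ᴴJ`, and matrix rings over a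
local ring with nilpotent maximal ideal are Dedekind-finite: modulo the non-units they become
matrix rings over a division ring.
-/

open Matrix

/-- The standard symplectic matrix `J₀ ∈ M_{2m}(A)`: the 2×2 block matrix
`[[0, I_m], [-I_m, 0]]` with `m × m` blocks. -/
def stdSymplectic (A : Type*) [Ring A] (m : ℕ) : Matrix (Fin (2 * m)) (Fin (2 * m)) A :=
  Matrix.of fun i j =>
    if (i : ℕ) + m = (j : ℕ) then (1 : A)
    else if (j : ℕ) + m = (i : ℕ) then (-1 : A) else 0

open scoped Pointwise

namespace IsLocalRing

variable {A : Type*} [Ring A] [IsLocalRing A]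

instance : IsDedekindFiniteMonoid A where
  mul_eq_one_symm {a b} hab := by
    have he : IsIdempotentElem (b * a) := by
      rw [IsIdempotentElem, mul_assoc, ← mul_assoc a, hab, one_mul]
    rcases isUnit_or_isUnit_of_add_one (add_sub_cancel (b * a) 1) with hu | hu
    · exact (IsIdempotentElem.iff_eq_one_of_isUnit hu).mp he
    · have hba : b * a = 0 :=
        sub_eq_self.mp ((IsIdempotentElem.iff_eq_one_of_isUnit hu).mp he.one_sub)
      refine absurd ?_ (one_ne_zero (α := A))
      calc (1 : A) = a * b * (a * b) := by rw [hab, one_mul]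
        _ = a * (b * a) * b := by simp only [mul_assoc]
        _ = 0 := by rw [hba, mul_zero, zero_mul]

variable (A) in
def nonunitsTwoSidedIdeal : TwoSidedIdeal A :=
  .mk' (nonunits A) (by simp) nonunits_add (fun hx => by simpa [mem_nonunits_iff] using hx)
    (fun hy hxy => hy (isUnit_of_mul_isUnit_right hxy))
    (fun hx hxy => hx (isUnit_of_mul_isUnit_left hxy))

theorem mem_nonunitsTwoSidedIdeal {x : A} : x ∈ nonunitsTwoSidedIdeal A ↔ x ∈ nonunits A :=
  TwoSidedIdeal.mem_mk' ..

variable (A) in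
abbrev ResidueDivisionRing : Type _ := (nonunitsTwoSidedIdeal A).ringCon.Quotient

theorem coe_residueDivisionRing_eq_zero_iff {x : A} :
    (x : ResidueDivisionRing A) = 0 ↔ x ∈ nonunits A := by
  rw [← mem_nonunitsTwoSidedIdeal, TwoSidedIdeal.mem_iff]
  exact RingCon.eq _

instance : Nontrivial (ResidueDivisionRing A) :=
  ⟨1, 0, fun h => coe_residueDivisionRing_eq_zero_iff.mp (by exact_mod_cast h) isUnit_one⟩

noncomputable instance : DivisionRing (ResidueDivisionRing A) :=
  .ofIsUnitOrEqZero fun a => by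
    obtain ⟨x, rfl⟩ := (nonunitsTwoSidedIdeal A).ringCon.mk'_surjective a
    by_cases hx : IsUnit x
    · exact .inl (hx.map _)
    · exact .inr (coe_residueDivisionRing_eq_zero_iff.mpr hx)

theorem nonunitsAddSubmonoid_pow_eq_bot {e : ℕ}
    (h : ∀ l : List A, l.length = e → (∀ x ∈ l, x ∈ nonunits A) → l.prod = 0) :
    nonunitsAddSubmonoid A ^ e = ⊥ := by
  rw [AddSubmonoid.pow_eq_closure_pow_set, eq_bot_iff, AddSubmonoid.closure_le]
  intro x hx
  obtain ⟨f, rfl⟩ := Set.mem_pow.mp hx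
  refine h _ List.length_ofFn ?_
  simp only [List.mem_ofFn, forall_exists_index]
  rintro _ i rfl
  exact (f i).2

end IsLocalRing

theorem TwoSidedIdeal.mem_nonunits_of_ne_top {R : Type*} [Ring R] {I : TwoSidedIdeal R}
    (hI : I ≠ ⊤) {x : R} (hx : x ∈ I) : x ∈ nonunits R := by
  rintro ⟨u, rfl⟩
  exact hI (I.one_mem_iff.mp (by simpa using I.mul_mem_left (↑u⁻¹) _ hx))

namespace Matrix

variable {R : Type*} [Semiring R] {n : Type*} [Fintype n]

theorem mul_apply_mem_mul {S T : AddSubmonoid R} {M N : Matrix n n R}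
    (hM : ∀ i j, M i j ∈ S) (hN : ∀ i j, N i j ∈ T) (i j : n) : (M * N) i j ∈ S * T :=
  AddSubmonoid.sum_mem _ fun k _ => AddSubmonoid.mul_mem_mul (hM i k) (hN k j)

theorem pow_apply_mem_pow [DecidableEq n] {S : AddSubmonoid R} {M : Matrix n n R}
    (hM : ∀ i j, M i j ∈ S) : ∀ (k : ℕ) (i j : n), (M ^ k) i j ∈ S ^ k
  | 0, i, j => by
    rw [pow_zero, pow_zero, one_apply]
    split_ifs
    exacts [by exact_mod_cast AddSubmonoid.natCast_mem_one 1, zero_mem _]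
  | k + 1, i, j => by
    rw [pow_succ, pow_succ]
    exact mul_apply_mem_mul (pow_apply_mem_pow hM k) hM i j

theorem pow_eq_zero_of_forall_mem [DecidableEq n] {S : AddSubmonoid R} {e : ℕ} (hS : S ^ e = ⊥)
    {M : Matrix n n R} (hM : ∀ i j, M i j ∈ S) : M ^ e = 0 := by
  ext i j
  simpa [hS] using pow_apply_mem_pow hM e i j

instance invertibleTwo {A : Type*} [Ring A] [Invertible (2 : A)] [DecidableEq n] :
    Invertible (2 : Matrix n n A) :=
  (Invertible.map (scalar n : A →+* Matrix n n A) 2).copy 2 (map_ofNat _ 2).symm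

end Matrix

theorem IsLocalRing.isStablyFiniteRing_of_pow_eq_bot {A : Type*} [Ring A] [IsLocalRing A] {e : ℕ}
    (he : nonunitsAddSubmonoid A ^ e = ⊥) : IsStablyFiniteRing A where
  isDedekindFiniteMonoid k := ⟨fun {B D} hBD => by
    let π := (RingCon.mk' (nonunitsTwoSidedIdeal A).ringCon).mapMatrix (m := Fin k)
    have hπ : π (1 - D * B) = 0 := by
      rw [map_sub, map_one, map_mul, mul_eq_one_symm (by rw [← map_mul, hBD, map_one]), sub_self]
    have hidem : IsIdempotentElem (1 - D * B) :=
      IsIdempotentElem.one_sub (by rw [IsIdempotentElem, mul_assoc, ← mul_assoc B, hBD, one_mul])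
    have hnil : IsNilpotent (1 - D * B) :=
      ⟨e, Matrix.pow_eq_zero_of_forall_mem he fun i j =>
        coe_residueDivisionRing_eq_zero_iff.mp congr($hπ i j)⟩
    exact (sub_eq_zero.mp (hidem.eq_zero_of_isNilpotent hnil)).symm⟩

section SymplecticNewton

variable {R : Type*} [Ring R]

theorem commute_invOf_two [Invertible (2 : R)] (x : R) : Commute (⅟2 : R) x :=
  (Commute.ofNat_left 2 x).invOf_left

variable [StarRing R] {J₀ F : R}

theorem star_invOf_two [Invertible (2 : R)] : star (⅟2 : R) = ⅟2 := by
  refine (invOf_eq_left_inv ?_).symm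
  calc star (⅟2 : R) * 2 = star (2 * ⅟2) := by rw [star_mul, star_ofNat]
    _ = 1 := by rw [mul_invOf_self, star_one]

theorem mul_star_one_add_mul (hJ₀ : star J₀ = -J₀) (hF : star F = -F) :
    J₀ * star (1 + J₀ * F) = (1 + J₀ * F) * J₀ := by
  rw [star_add, star_one, star_mul, hJ₀, hF]
  noncomm_ring

theorem symplectic_newton_step [Invertible (2 : R)] (hJ₀ : star J₀ = -J₀) (hF : star F = -F)
    {N : R} (hN : 1 + J₀ * F = N) :
    1 + J₀ * (star (1 + ⅟2 * N) * F * (1 + ⅟2 * N)) = N ^ 2 * (⅟2 * ⅟2 * (3 + N)) := by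
  set T := 1 + ⅟2 * N with hT
  have hJ₀N : J₀ * star N = N * J₀ := hN ▸ mul_star_one_add_mul hJ₀ hF
  have hJ₀T : J₀ * star T = T * J₀ := by
    rw [hT, star_add, star_one, star_mul, star_invOf_two, mul_add, mul_one, ← mul_assoc, hJ₀N,
      mul_assoc, ← (commute_invOf_two J₀).eq, ← mul_assoc, ← (commute_invOf_two N).eq, add_mul,
      one_mul, mul_assoc]
  have h2T : 2 * T = 2 + N := by rw [hT, mul_add, mul_one, ← mul_assoc, mul_invOf_self, one_mul]
  have hJ₀F : J₀ * F = N - 1 := by rw [← hN, add_sub_cancel_left]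
  have h4 : 2 * 2 * (1 + T * (N - 1) * T) = N ^ 2 * (3 + N) := by
    calc 2 * 2 * (1 + T * (N - 1) * T) = 2 * 2 + (2 * T) * (N - 1) * (2 * T) := by noncomm_ring
      _ = N ^ 2 * (3 + N) := by rw [h2T]; noncomm_ring
  calc 1 + J₀ * (star T * F * T) = 1 + T * (N - 1) * T := by
        rw [← mul_assoc, ← mul_assoc, hJ₀T, mul_assoc T, hJ₀F]
    _ = ⅟2 * ⅟2 * (2 * 2 * (1 + T * (N - 1) * T)) := by
        simp only [mul_assoc, invOf_mul_cancel_left]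
    _ = N ^ 2 * (⅟2 * ⅟2 * (3 + N)) := by
        rw [h4, ← mul_assoc, ((commute_invOf_two _).mul_left (commute_invOf_two _)).eq, mul_assoc]

theorem exists_sub_one_mem_and_star_mul_mul_eq [Invertible (2 : R)] (hJ₀ : star J₀ = -J₀)
    (hJ₀sq : J₀ * J₀ = -1) (𝔞 : TwoSidedIdeal R) (hF : star F = -F)
    (hnil : IsNilpotent (1 + J₀ * F)) (h𝔞 : 1 + J₀ * F ∈ 𝔞) :
    ∃ T, T - 1 ∈ 𝔞 ∧ star T * F * T = J₀ := by
  obtain ⟨p, hp⟩ := hnil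
  induction p using Nat.strong_induction_on generalizing F with
  | _ p ih =>
    set N := 1 + J₀ * F with hN
    by_cases hp1 : p ≤ 1
    · have hJ₀F : J₀ * F = -1 :=
        eq_neg_of_add_eq_zero_right (by simpa using pow_eq_zero_of_le hp1 hp)
      refine ⟨1, by simp, ?_⟩
      calc star 1 * F * 1 = -(J₀ * J₀) * F := by rw [hJ₀sq, neg_neg, star_one, one_mul, mul_one]
        _ = J₀ := by rw [neg_mul, mul_assoc, hJ₀F]; simp
    set T := 1 + ⅟2 * N with hT
    have hF' : star (star T * F * T) = -(star T * F * T) := by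
      rw [star_mul, star_mul, star_star, hF]; noncomm_ring
    have hstep := symplectic_newton_step hJ₀ hF hN.symm
    have hcomm : Commute (N ^ 2) (⅟2 * ⅟2 * (3 + N)) :=
      (((commute_invOf_two N).symm.mul_right (commute_invOf_two N).symm).mul_right
        ((Commute.ofNat_right N 3).add_right (Commute.refl N))).pow_left 2
    -- the new defect is `N² u` with `u` commuting with `N`, so its `⌈p/2⌉`-th power vanishes
    obtain ⟨T', hT'𝔞, hT'⟩ := ih ((p + 1) / 2) (by omega) hF'
      (by rw [hstep, pow_two, mul_assoc]; exact 𝔞.mul_mem_right _ _ h𝔞)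
      (by rw [hstep, hcomm.mul_pow, ← pow_mul, pow_eq_zero_of_le (by omega) hp, zero_mul])
    refine ⟨T * T', ?_, by simpa only [star_mul, mul_assoc] using hT'⟩
    have hsplit : T * T' - 1 = T * (T' - 1) + ⅟2 * N := by rw [hT]; noncomm_ring
    rw [hsplit]
    exact 𝔞.add_mem (𝔞.mul_mem_left _ _ hT'𝔞) (𝔞.mul_mem_left _ _ h𝔞)

end SymplecticNewton

section StdSymplectic

variable {A : Type*} [Ring A] {m : ℕ}

theorem stdSymplectic_eq_submatrix_fromBlocks :
    stdSymplectic A m = (fromBlocks 0 1 (-1) 0).submatrix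
      ((finCongr (two_mul m)).trans finSumFinEquiv.symm)
      ((finCongr (two_mul m)).trans finSumFinEquiv.symm) := by
  ext i j
  obtain ⟨a, rfl⟩ := ((finCongr (two_mul m)).trans finSumFinEquiv.symm).symm.surjective i
  obtain ⟨b, rfl⟩ := ((finCongr (two_mul m)).trans finSumFinEquiv.symm).symm.surjective j
  simp only [submatrix_apply, Equiv.apply_symm_apply]
  rcases a with a | a <;> rcases b with b | b <;> have := a.isLt <;> have := b.isLt <;>
    simp [stdSymplectic, one_apply, Fin.ext_iff] <;>
    split_ifs <;> first | rfl | (exfalso; omega) | simp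

theorem stdSymplectic_mul_self : stdSymplectic A m * stdSymplectic A m = -1 := by
  rw [stdSymplectic_eq_submatrix_fromBlocks, submatrix_mul_equiv, fromBlocks_multiply]
  simp only [Matrix.zero_mul, Matrix.one_mul, Matrix.mul_zero, Matrix.neg_mul, zero_add, add_zero]
  rw [show fromBlocks (-1) 0 0 (-1) = -(1 : Matrix (Fin m ⊕ Fin m) (Fin m ⊕ Fin m) A) by
    rw [← fromBlocks_one, fromBlocks_neg, neg_zero]]
  exact congrArg Neg.neg (submatrix_one_equiv _)

theorem stdSymplectic_conjTranspose [StarRing A] :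
    (stdSymplectic A m)ᴴ = -stdSymplectic A m := by
  ext i j
  simp only [stdSymplectic, conjTranspose_apply, of_apply, Matrix.neg_apply]
  by_cases h₁ : (i : ℕ) + m = j <;> by_cases h₂ : (j : ℕ) + m = i <;> simp [h₁, h₂]
  omega

end StdSymplectic

theorem stmt8_general {A : Type*} [Ring A] [StarRing A] [IsLocalRing A]
    (h2 : IsUnit (2 : A))
    (hnil : ∃ e : ℕ, 0 < e ∧
      ∀ l : List A, l.length = e → (∀ x ∈ l, x ∈ nonunits A) → l.prod = 0)
    {m : ℕ}
    (J : Matrix (Fin (2 * m)) (Fin (2 * m)) A) (hsh : Jᴴ = -J)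
    (I : TwoSidedIdeal A) (hI : I ≠ ⊤)
    (C : Matrix (Fin (2 * m)) (Fin (2 * m)) A)
    (hC : ∀ i j, (Cᴴ * J * C - stdSymplectic A m) i j ∈ I) :
    ∃ C' : Matrix (Fin (2 * m)) (Fin (2 * m)) A, IsUnit C' ∧
      (∀ i j, (C' - C) i j ∈ I) ∧ C'ᴴ * J * C' = stdSymplectic A m := by
  obtain ⟨e, -, hnil⟩ := hnil
  have h𝔪 := IsLocalRing.nonunitsAddSubmonoid_pow_eq_bot hnil
  have := IsLocalRing.isStablyFiniteRing_of_pow_eq_bot h𝔪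
  let := h2.invertible
  set J₀ := stdSymplectic A m
  set F := Cᴴ * J * C with hFdef
  have hF : star F = -F := by
    rw [star_eq_conjTranspose, hFdef, conjTranspose_mul, conjTranspose_mul,
      conjTranspose_conjTranspose, hsh, Matrix.neg_mul, Matrix.mul_neg, Matrix.mul_assoc]
  have hN : 1 + J₀ * F ∈ I.matrix _ := by
    rw [show 1 + J₀ * F = J₀ * (F - J₀) by rw [mul_sub, stdSymplectic_mul_self]; abel]
    exact (I.matrix _).mul_mem_left _ _ hC
  obtain ⟨T, hT1, hT⟩ := exists_sub_one_mem_and_star_mul_mul_eq stdSymplectic_conjTranspose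
    stdSymplectic_mul_self (I.matrix _) hF
    ⟨e, Matrix.pow_eq_zero_of_forall_mem h𝔪 fun i j => I.mem_nonunits_of_ne_top hI (hN i j)⟩ hN
  have hCT : (C * T)ᴴ * J * (C * T) = J₀ := by
    rw [← hT, conjTranspose_mul, star_eq_conjTranspose]
    simp only [hFdef, Matrix.mul_assoc]
  refine ⟨C * T, IsUnit.of_mul_eq_one_right (-(J₀ * (C * T)ᴴ * J)) ?_, ?_, hCT⟩
  · rw [Matrix.neg_mul, Matrix.mul_assoc, Matrix.mul_assoc, ← Matrix.mul_assoc _ J, hCT,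
      stdSymplectic_mul_self, neg_neg]
  · rw [← TwoSidedIdeal.mem_matrix, show C * T - C = C * (T - 1) by rw [mul_sub, mul_one]]
    exact (I.matrix _).mul_mem_left _ _ hT1

/-- Let `A` be a local ring with involution `*` such that `2` is a unit,
`a - a*` is a non-unit for every `a`, and the Jacobson radical (= set of non-units) is
nilpotent.  Let `J ∈ M_{2m}(A)` be an invertible skew-hermitian matrix, `I` a proper
two-sided ideal, and `C ∈ M_{2m}(A)` a matrix with `CᴴJC ≡ J₀` entrywise mod `I`
(an approximate symplectic system modulo `I`).  Then there is an invertible `C'` with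
`C' ≡ C` entrywise mod `I` and `C'ᴴJC' = J₀`. -/
theorem stmt8 {A : Type*} [Ring A] [StarRing A] [IsLocalRing A]
    (h2 : IsUnit (2 : A)) (hsk : ∀ a : A, a - star a ∈ nonunits A)
    (hnil : ∃ e : ℕ, 0 < e ∧
      ∀ l : List A, l.length = e → (∀ x ∈ l, x ∈ nonunits A) → l.prod = 0)
    {m : ℕ} (hm : 1 ≤ m)
    (J : Matrix (Fin (2 * m)) (Fin (2 * m)) A) (hJ : IsUnit J) (hsh : Jᴴ = -J)
    (I : TwoSidedIdeal A) (hI : I ≠ ⊤)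
    (C : Matrix (Fin (2 * m)) (Fin (2 * m)) A)
    (hC : ∀ i j, (Cᴴ * J * C - stdSymplectic A m) i j ∈ I) :
    ∃ C' : Matrix (Fin (2 * m)) (Fin (2 * m)) A, IsUnit C' ∧
      (∀ i j, (C' - C) i j ∈ I) ∧ C'ᴴ * J * C' = stdSymplectic A m :=
  stmt8_general h2 hnil J hsh I hI C hC
end
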